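/- arXiv:1908.00835 — 2 statements merged into one kernel-verified Lean document; each statement's English description precedes it below -/
import Mathlib

section
/- Let μ : ℕ → ℝ be a sequence of real numbers and let a, b, a', b' : ℕ → ℝ be real sequences satisfying a'₀ = −b₀ − μ₀·a₁, b'₀ = −a₀ − μ₀·b₁, and, for every k ≥ 1, a'_k = μ_{k−1}·a_{k−1} − μ_k·a_{k+1} and b'_k = μ_{k−1}·b_{k−1} − μ_k·b_{k+1}. If μ_k·(a_k·b_{k+1} + a_{k+1}·b_k) → 0 as k → ∞, then the series Σ_{k=0}^∞ (a_k·b'_k + a'_k·b_k) converges and Σ_{k=0}^∞ (a_k·b'_k + a'_k·b_k) = −(a₀² + b₀²). -/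
open Filter Topology Finset

/-! Each summand with `k ≥ 1` is the difference `c (k - 1) - c k` of consecutive boundary terms
`c k = μ k (a k b (k+1) + a (k+1) b k)`, and the summand with `k = 0` is `-(a₀² + b₀²) - c 0`.
So the `n + 1`-st partial sum is `-(a₀² + b₀²) - c n`, which tends to `-(a₀² + b₀²)` since `c n → 0`. -/

section Telescoping

variable {R : Type*} [CommRing R] (μ a b a' b' : ℕ → R)

def crossTerm (k : ℕ) : R := μ k * (a k * b (k + 1) + a (k + 1) * b k)

variable {μ a b a' b'}

lemma summand_zero_eq (ha : a' 0 = -b 0 - μ 0 * a 1) (hb : b' 0 = -a 0 - μ 0 * b 1) :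
    a 0 * b' 0 + a' 0 * b 0 = -(a 0 ^ 2 + b 0 ^ 2) - crossTerm μ a b 0 := by
  rw [ha, hb, crossTerm]
  ring

lemma summand_succ_eq {k : ℕ} (ha : a' (k + 1) = μ k * a k - μ (k + 1) * a (k + 2))
    (hb : b' (k + 1) = μ k * b k - μ (k + 1) * b (k + 2)) :
    a (k + 1) * b' (k + 1) + a' (k + 1) * b (k + 1) = crossTerm μ a b k - crossTerm μ a b (k + 1) := by
  rw [ha, hb, crossTerm, crossTerm]
  ring

lemma sum_range_succ_eq_sub_crossTerm (ha0 : a' 0 = -b 0 - μ 0 * a 1)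
    (hb0 : b' 0 = -a 0 - μ 0 * b 1)
    (ha : ∀ k, a' (k + 1) = μ k * a k - μ (k + 1) * a (k + 2))
    (hb : ∀ k, b' (k + 1) = μ k * b k - μ (k + 1) * b (k + 2)) (n : ℕ) :
    ∑ k ∈ range (n + 1), (a k * b' k + a' k * b k) = -(a 0 ^ 2 + b 0 ^ 2) - crossTerm μ a b n := by
  rw [sum_range_succ', sum_congr rfl fun k _ => summand_succ_eq (ha k) (hb k), sum_range_sub',
    summand_zero_eq ha0 hb0]
  ring

end Telescoping

/-- Telescoping sum identity underlying
`Σ_{n odd} (α_{n1} β̇_{n1} + α̇_{n1} β_{n1}) = −(α₁₁² + β₁₁²)` for the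
time-dependent Bogoliubov coefficients of the (1+1)-dimensional
dynamical Casimir effect. -/
theorem stmt_1 (μ a b a' b' : ℕ → ℝ)
    (ha0 : a' 0 = -b 0 - μ 0 * a 1)
    (hb0 : b' 0 = -a 0 - μ 0 * b 1)
    (hak : ∀ k, 1 ≤ k → a' k = μ (k - 1) * a (k - 1) - μ k * a (k + 1))
    (hbk : ∀ k, 1 ≤ k → b' k = μ (k - 1) * b (k - 1) - μ k * b (k + 1))
    (hlim : Tendsto (fun k => μ k * (a k * b (k + 1) + a (k + 1) * b k)) atTop (𝓝 0)) :
    Tendsto (fun n => ∑ k ∈ Finset.range n, (a k * b' k + a' k * b k)) atTop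
      (𝓝 (-(a 0 ^ 2 + b 0 ^ 2))) := by
  have hsum := sum_range_succ_eq_sub_crossTerm ha0 hb0 (fun k => hak (k + 1) k.succ_pos)
    (fun k => hbk (k + 1) k.succ_pos)
  have hlim' : Tendsto (fun n => -(a 0 ^ 2 + b 0 ^ 2) - crossTerm μ a b n) atTop
      (𝓝 (-(a 0 ^ 2 + b 0 ^ 2))) := by
    simpa only [sub_zero, crossTerm] using tendsto_const_nhds.sub hlim
  rw [← funext hsum] at hlim'
  exact (tendsto_add_atTop_iff_nat 1).mp hlim'
end

section
/- For every τ > 0, the function G₁₁(τ) = −(4/(π²κ(τ)²))·(E(κ(τ)) − κ̃(τ)²·K(κ(τ)))·(K(κ(τ)) − E(κ(τ))) is differentiable at τ with derivative G₁₁'(τ) = −(16/(π²κ(τ)⁴))·[(E(κ(τ)) − κ̃(τ)²·K(κ(τ)))² + κ̃(τ)²·(E(κ(τ)) − K(κ(τ)))²]. -/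
open Real Filter Topology

/-- Complete elliptic integral of the first kind. -/
noncomputable def ellipticK (k : ℝ) : ℝ :=
  ∫ α in (0:ℝ)..(Real.pi / 2), 1 / Real.sqrt (1 - k ^ 2 * Real.sin α ^ 2)

/-- Complete elliptic integral of the second kind. -/
noncomputable def ellipticE (k : ℝ) : ℝ :=
  ∫ α in (0:ℝ)..(Real.pi / 2), Real.sqrt (1 - k ^ 2 * Real.sin α ^ 2)

/-- κ(τ) = √(1 − e^{−8τ}). -/
noncomputable def kappa (τ : ℝ) : ℝ := Real.sqrt (1 - Real.exp (-8 * τ))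

/-- κ̃(τ) = e^{−4τ}. -/
noncomputable def kappaT (τ : ℝ) : ℝ := Real.exp (-4 * τ)

/-- Diagonal entry of the reduced covariance matrix of the resonant mode. -/
noncomputable def G₁₁ (τ : ℝ) : ℝ :=
  -(4 / (Real.pi ^ 2 * kappa τ ^ 2)) *
    ((ellipticE (kappa τ) - kappaT τ ^ 2 * ellipticK (kappa τ)) *
      (ellipticK (kappa τ) - ellipticE (kappa τ)))

/-- Off-diagonal entry of the reduced covariance matrix of the resonant mode. -/
noncomputable def G₁₂ (τ : ℝ) : ℝ :=
  (4 / Real.pi ^ 2) * (ellipticE (kappa τ) * ellipticK (kappa τ))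


/-! Put `m = κ²`, the parameter of the complete elliptic integrals; then `κ̃² = 1 - m` and
`G₁₁ = -(4 / (π² m)) (E - (1 - m) K) (K - E)`. Differentiating under the integral sign gives
Legendre's relations `dE/dm = (E - K) / (2m)` and `dK/dm = (E - (1 - m) K) / (2m (1 - m))`, the
latter via `(1 - m) ∫ (1 - m sin² α)^(-3/2) dα = E`, read off from the antiderivative
`m sin α cos α / √(1 - m sin² α)`. Thus `(E - (1 - m) K)' = K / 2` and `(K - E)' = E / (2 (1 - m))`,
and the chain rule with `dm/dτ = 8 κ̃²` gives the formula. -/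

open MeasureTheory Set

section Integrand

variable {m : ℝ}

theorem one_sub_mul_sin_sq_mem_uIcc (x α : ℝ) : 1 - x * sin α ^ 2 ∈ uIcc 1 (1 - x) := by
  have hs₀ := sq_nonneg (sin α)
  have hs₁ := sin_sq_le_one α
  rcases le_total 0 x with hx | hx
  · rw [uIcc_of_ge (by linarith)]; constructor <;> nlinarith
  · rw [uIcc_of_le (by linarith)]; constructor <;> nlinarith

theorem one_sub_mul_sin_sq_pos (hm : m < 1) (α : ℝ) : 0 < 1 - m * sin α ^ 2 := by
  have := one_sub_mul_sin_sq_mem_uIcc m α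
  rw [mem_uIcc] at this
  rcases this with h | h <;> linarith [h.1, h.2]

theorem hasDerivAt_integral_comp_one_sub_mul_sin_sq {φ φ' : ℝ → ℝ}
    (hφ : ∀ u, 0 < u → HasDerivAt φ (φ' u) u) (hφ' : ContinuousOn φ' (Ioi 0))
    {a b : ℝ} (hm : m < 1) :
    HasDerivAt (fun x => ∫ α in a..b, φ (1 - x * sin α ^ 2))
      (∫ α in a..b, -(sin α ^ 2 * φ' (1 - m * sin α ^ 2))) m := by
  have hφc : ContinuousOn φ (Ioi 0) := fun u hu => (hφ u hu).continuousAt.continuousWithinAt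
  have hcomp : ∀ {ψ : ℝ → ℝ}, ContinuousOn ψ (Ioi 0) → ∀ {x : ℝ}, x < 1 →
      Continuous fun α => ψ (1 - x * sin α ^ 2) := fun hψ _ hx =>
    hψ.comp_continuous (by fun_prop) (one_sub_mul_sin_sq_pos hx)
  -- for `x` near `m`, `1 - x sin² α` stays in a compact `I ⊆ (0, ∞)`, where `φ'` is bounded
  obtain ⟨δ, hδ, hmδ⟩ : ∃ δ, 0 < δ ∧ m + δ < 1 := ⟨(1 - m) / 2, by linarith, by linarith⟩
  set I := Icc (min 1 (1 - m - δ)) (max 1 (1 - m + δ))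
  have hball : ∀ x ∈ Metric.ball m δ, x < 1 ∧ ∀ α, 1 - x * sin α ^ 2 ∈ I := by
    intro x hx
    obtain ⟨hx₁, hx₂⟩ := abs_lt.1 (Real.dist_eq x m ▸ Metric.mem_ball.1 hx)
    refine ⟨by linarith, fun α => uIcc_subset_Icc ?_ ?_ (one_sub_mul_sin_sq_mem_uIcc x α)⟩
    · exact ⟨min_le_left _ _, le_max_left _ _⟩
    · exact ⟨(min_le_right _ _).trans (by linarith), (by linarith : 1 - x ≤ 1 - m + δ).trans
        (le_max_right _ _)⟩
  obtain ⟨C, hC⟩ : ∃ C, ∀ u ∈ I, ‖φ' u‖ ≤ C := isCompact_Icc.exists_bound_of_continuousOn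
    (hφ'.mono fun u hu => lt_of_lt_of_le (lt_min one_pos (by linarith)) hu.1)
  refine (intervalIntegral.hasDerivAt_integral_of_dominated_loc_of_deriv_le
    (F' := fun x α => -(sin α ^ 2 * φ' (1 - x * sin α ^ 2))) (bound := fun _ => C)
    (Metric.ball_mem_nhds m hδ) ?_ ((hcomp hφc hm).intervalIntegrable _ _)
    ((continuous_sin.pow 2).mul (hcomp hφ' hm)).neg.aestronglyMeasurable
    ?_ intervalIntegrable_const ?_).2
  · filter_upwards [Iio_mem_nhds hm] with x hx
    exact (hcomp hφc hx).aestronglyMeasurable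
  · refine Filter.Eventually.of_forall fun α _ x hx => ?_
    rw [norm_neg, norm_mul, norm_pow, Real.norm_eq_abs (sin α), sq_abs]
    exact (mul_le_of_le_one_left (norm_nonneg _) (sin_sq_le_one α)).trans
      (hC _ ((hball x hx).2 α))
  · exact Filter.Eventually.of_forall fun α _ x hx =>
      ((hφ _ (one_sub_mul_sin_sq_pos (hball x hx).1 α)).comp x
      (((hasDerivAt_id' x).mul_const (sin α ^ 2)).const_sub 1)).congr_deriv (by ring)

end Integrand

noncomputable def ellipticKParam (m : ℝ) : ℝ :=
  ∫ α in (0:ℝ)..(π / 2), 1 / √(1 - m * sin α ^ 2)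

noncomputable def ellipticEParam (m : ℝ) : ℝ :=
  ∫ α in (0:ℝ)..(π / 2), √(1 - m * sin α ^ 2)

theorem ellipticK_eq_ellipticKParam (k : ℝ) : ellipticK k = ellipticKParam (k ^ 2) := rfl

theorem ellipticE_eq_ellipticEParam (k : ℝ) : ellipticE k = ellipticEParam (k ^ 2) := rfl

section Legendre

variable {m : ℝ}

theorem hasDerivAt_mul_sin_mul_cos_div_sqrt (hm : m < 1) (α : ℝ) :
    HasDerivAt (fun x => m * (sin x * cos x / √(1 - m * sin x ^ 2)))
      (√(1 - m * sin α ^ 2) - (1 - m) / ((1 - m * sin α ^ 2) * √(1 - m * sin α ^ 2))) α := by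
  have hu := one_sub_mul_sin_sq_pos hm α
  have hu' : HasDerivAt (fun x => 1 - m * sin x ^ 2) (-(m * (2 * sin α * cos α))) α := by
    refine ((((hasDerivAt_sin α).fun_pow 2).const_mul m).const_sub 1).congr_deriv ?_
    push_cast; ring
  refine ((((hasDerivAt_sin α).fun_mul (hasDerivAt_cos α)).fun_div (hu'.sqrt hu.ne')
    (Real.sqrt_pos.2 hu).ne').const_mul m).congr_deriv ?_
  have hr : √(1 - m * sin α ^ 2) ^ 2 = 1 - m * sin α ^ 2 := Real.sq_sqrt hu.le
  have hr0 : √(1 - m * sin α ^ 2) ≠ 0 := (Real.sqrt_pos.2 hu).ne'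
  field_simp
  rw [hr, cos_sq']
  ring

theorem ellipticEParam_eq_one_sub_mul_integral (hm : m < 1) :
    ellipticEParam m =
      (1 - m) * ∫ α in (0:ℝ)..(π / 2), 1 / ((1 - m * sin α ^ 2) * √(1 - m * sin α ^ 2)) := by
  have hu : Continuous fun α => 1 - m * sin α ^ 2 := by fun_prop
  have hv : ∀ α, (1 - m * sin α ^ 2) * √(1 - m * sin α ^ 2) ≠ 0 := fun α =>
    (mul_pos (one_sub_mul_sin_sq_pos hm α) (Real.sqrt_pos.2 (one_sub_mul_sin_sq_pos hm α))).ne'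
  -- the boundary terms of `m sin α cos α / √(1 - m sin² α)` vanish at `0` and `π / 2`
  have hftc := intervalIntegral.integral_eq_sub_of_hasDerivAt
    (fun α _ => hasDerivAt_mul_sin_mul_cos_div_sqrt hm α)
    ((hu.sqrt.sub (continuous_const.div (hu.mul hu.sqrt) hv)).intervalIntegrable 0 (π / 2))
  simp only [sin_zero, cos_pi_div_two, mul_zero, zero_mul, zero_div, sub_self] at hftc
  have hI : IntervalIntegrable (fun α => (1 - m) / ((1 - m * sin α ^ 2) * √(1 - m * sin α ^ 2)))
      volume 0 (π / 2) := (continuous_const.div (hu.mul hu.sqrt) hv).intervalIntegrable _ _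
  rw [intervalIntegral.integral_sub (hu.sqrt.intervalIntegrable _ _) hI] at hftc
  simp only [div_eq_mul_one_div (1 - m), intervalIntegral.integral_const_mul] at hftc
  rw [ellipticEParam]
  linarith

theorem hasDerivAt_ellipticEParam (hm₀ : m ≠ 0) (hm : m < 1) :
    HasDerivAt ellipticEParam ((ellipticEParam m - ellipticKParam m) / (2 * m)) m := by
  refine (hasDerivAt_integral_comp_one_sub_mul_sin_sq (φ := (√·)) (φ' := fun u => 1 / (2 * √u))
    (fun u hu => Real.hasDerivAt_sqrt hu.ne') (continuousOn_const.div (by fun_prop)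
      fun u hu => by simp [(Real.sqrt_pos.2 hu).ne']) hm).congr_deriv ?_
  have hu : Continuous fun α => 1 - m * sin α ^ 2 := by fun_prop
  have hr : ∀ α, √(1 - m * sin α ^ 2) ≠ 0 := fun α =>
    (Real.sqrt_pos.2 (one_sub_mul_sin_sq_pos hm α)).ne'
  -- `m sin² α = 1 - u` turns the derivative of `√u` into a combination of `√u` and `1 / √u`
  have key : ∀ {r s : ℝ}, r ≠ 0 → r ^ 2 = 1 - m * s →
      -(s * (1 / (2 * r))) = (r - 1 / r) / (2 * m) := by
    intro r s hr0 hrs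
    field_simp
    linear_combination -hrs
  rw [intervalIntegral.integral_congr (g := fun α =>
      (√(1 - m * sin α ^ 2) - 1 / √(1 - m * sin α ^ 2)) / (2 * m)) fun α _ =>
    key (hr α) (Real.sq_sqrt (one_sub_mul_sin_sq_pos hm α).le)]
  have hI : IntervalIntegrable (fun α => 1 / √(1 - m * sin α ^ 2)) volume 0 (π / 2) :=
    (continuous_const.div hu.sqrt hr).intervalIntegrable _ _
  rw [intervalIntegral.integral_div, intervalIntegral.integral_sub (hu.sqrt.intervalIntegrable _ _)
    hI]
  rfl

theorem hasDerivAt_ellipticKParam (hm₀ : m ≠ 0) (hm : m < 1) :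
    HasDerivAt ellipticKParam
      ((ellipticEParam m - (1 - m) * ellipticKParam m) / (2 * m * (1 - m))) m := by
  have hφ : ∀ u : ℝ, 0 < u → HasDerivAt (fun u => 1 / √u) (-(1 / (2 * (u * √u)))) u := by
    intro u hu
    have hr := Real.sqrt_pos.2 hu
    simp only [one_div]
    refine ((Real.hasDerivAt_sqrt hu.ne').inv hr.ne').congr_deriv ?_
    rw [Real.sq_sqrt hu.le]
    field_simp
  refine (hasDerivAt_integral_comp_one_sub_mul_sin_sq hφ (continuousOn_const.div (by fun_prop)
      fun u hu => by simp [(Real.sqrt_pos.2 hu).ne', (mem_Ioi.1 hu).ne']).neg hm).congr_deriv ?_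
  have hu : Continuous fun α => 1 - m * sin α ^ 2 := by fun_prop
  have hu0 : ∀ α, 1 - m * sin α ^ 2 ≠ 0 := fun α => (one_sub_mul_sin_sq_pos hm α).ne'
  have hr : ∀ α, √(1 - m * sin α ^ 2) ≠ 0 := fun α =>
    (Real.sqrt_pos.2 (one_sub_mul_sin_sq_pos hm α)).ne'
  have key : ∀ {u r s : ℝ}, u ≠ 0 → r ≠ 0 → u = 1 - m * s →
      -(s * -(1 / (2 * (u * r)))) = (1 / (u * r) - 1 / r) / (2 * m) := by
    intro u r s hu0 hr0 hus
    field_simp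
    linear_combination hus
  rw [intervalIntegral.integral_congr (g := fun α =>
      (1 / ((1 - m * sin α ^ 2) * √(1 - m * sin α ^ 2)) - 1 / √(1 - m * sin α ^ 2)) / (2 * m))
    fun α _ => key (hu0 α) (hr α) rfl]
  have hI : IntervalIntegrable (fun α => 1 / ((1 - m * sin α ^ 2) * √(1 - m * sin α ^ 2)))
      volume 0 (π / 2) :=
    (continuous_const.div (hu.mul hu.sqrt) fun α =>
      mul_ne_zero (hu0 α) (hr α)).intervalIntegrable _ _
  have hK : IntervalIntegrable (fun α => 1 / √(1 - m * sin α ^ 2)) volume 0 (π / 2) :=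
    (continuous_const.div hu.sqrt hr).intervalIntegrable _ _
  rw [intervalIntegral.integral_div, intervalIntegral.integral_sub hI hK,
    ellipticEParam_eq_one_sub_mul_integral hm]
  have : 1 - m ≠ 0 := by linarith
  field_simp
  rfl

theorem hasDerivAt_ellipticEParam_sub_one_sub_mul_ellipticKParam (hm₀ : m ≠ 0) (hm : m < 1) :
    HasDerivAt (fun x => ellipticEParam x - (1 - x) * ellipticKParam x)
      (ellipticKParam m / 2) m := by
  refine ((hasDerivAt_ellipticEParam hm₀ hm).sub
    (((hasDerivAt_id' m).const_sub 1).fun_mul (hasDerivAt_ellipticKParam hm₀ hm))).congr_deriv ?_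
  have : 1 - m ≠ 0 := by linarith
  field_simp
  ring

theorem hasDerivAt_ellipticKParam_sub_ellipticEParam (hm₀ : m ≠ 0) (hm : m < 1) :
    HasDerivAt (fun x => ellipticKParam x - ellipticEParam x)
      (ellipticEParam m / (2 * (1 - m))) m := by
  refine ((hasDerivAt_ellipticKParam hm₀ hm).sub
    (hasDerivAt_ellipticEParam hm₀ hm)).congr_deriv ?_
  have : 1 - m ≠ 0 := by linarith
  field_simp
  ring

end Legendre

noncomputable def G₁₁Param (m : ℝ) : ℝ :=
  -(4 / (π ^ 2 * m)) *
    ((ellipticEParam m - (1 - m) * ellipticKParam m) * (ellipticKParam m - ellipticEParam m))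

theorem hasDerivAt_G₁₁Param {m : ℝ} (hm₀ : m ≠ 0) (hm : m < 1) :
    HasDerivAt G₁₁Param
      (-(2 / (π ^ 2 * m ^ 2 * (1 - m))) *
        ((ellipticEParam m - (1 - m) * ellipticKParam m) ^ 2 +
          (1 - m) * (ellipticEParam m - ellipticKParam m) ^ 2)) m := by
  have h := (((hasDerivAt_ellipticEParam_sub_one_sub_mul_ellipticKParam hm₀ hm).fun_mul
    (hasDerivAt_ellipticKParam_sub_ellipticEParam hm₀ hm)).fun_div (hasDerivAt_id' m)
    hm₀).const_mul (-(4 / π ^ 2))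
  have hG : G₁₁Param = fun x => -(4 / π ^ 2) *
      ((ellipticEParam x - (1 - x) * ellipticKParam x) * (ellipticKParam x - ellipticEParam x) /
        x) := by
    funext x
    rw [G₁₁Param]
    ring
  rw [hG]
  refine h.congr_deriv ?_
  have : 1 - m ≠ 0 := by linarith
  field_simp
  ring

section Kappa

variable {τ : ℝ}

theorem kappa_sq (hτ : 0 ≤ τ) : kappa τ ^ 2 = 1 - exp (-8 * τ) :=
  Real.sq_sqrt (by linarith [exp_le_one_iff.2 (by linarith : -8 * τ ≤ 0)])

theorem kappaT_sq (τ : ℝ) : kappaT τ ^ 2 = exp (-8 * τ) := by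
  rw [kappaT, ← exp_nat_mul]; ring_nf

theorem kappaT_sq_eq_one_sub_kappa_sq (hτ : 0 ≤ τ) : kappaT τ ^ 2 = 1 - kappa τ ^ 2 := by
  rw [kappa_sq hτ, kappaT_sq]; ring

theorem kappa_sq_pos (hτ : 0 < τ) : 0 < kappa τ ^ 2 := by
  rw [kappa_sq hτ.le]; linarith [exp_lt_one_iff.2 (by linarith : -8 * τ < 0)]

theorem kappa_sq_lt_one (hτ : 0 ≤ τ) : kappa τ ^ 2 < 1 := by
  rw [kappa_sq hτ]; linarith [exp_pos (-8 * τ)]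

theorem hasDerivAt_kappa_sq (hτ : 0 < τ) :
    HasDerivAt (fun t => kappa t ^ 2) (8 * kappaT τ ^ 2) τ := by
  have h := (((hasDerivAt_id' τ).const_mul (-8)).exp).const_sub 1
  refine (h.congr_of_eventuallyEq ?_).congr_deriv ?_
  · filter_upwards [lt_mem_nhds hτ] with t ht using kappa_sq ht.le
  · rw [kappaT_sq]; ring

theorem G₁₁_eq_G₁₁Param (hτ : 0 ≤ τ) : G₁₁ τ = G₁₁Param (kappa τ ^ 2) := by
  rw [G₁₁, G₁₁Param, kappaT_sq_eq_one_sub_kappa_sq hτ, ellipticE_eq_ellipticEParam,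
    ellipticK_eq_ellipticKParam]

end Kappa

/-- For every τ > 0, G₁₁ is differentiable at τ with the stated derivative. -/
theorem stmt_2 (τ : ℝ) (hτ : 0 < τ) :
    HasDerivAt G₁₁
      (-(16 / (Real.pi ^ 2 * kappa τ ^ 4)) *
        ((ellipticE (kappa τ) - kappaT τ ^ 2 * ellipticK (kappa τ)) ^ 2 +
          kappaT τ ^ 2 * (ellipticE (kappa τ) - ellipticK (kappa τ)) ^ 2)) τ := by
  have hG : G₁₁ =ᶠ[𝓝 τ] G₁₁Param ∘ fun t => kappa t ^ 2 := by
    filter_upwards [lt_mem_nhds hτ] with t ht using G₁₁_eq_G₁₁Param ht.le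
  refine (((hasDerivAt_G₁₁Param (kappa_sq_pos hτ).ne' (kappa_sq_lt_one hτ.le)).comp τ
    (hasDerivAt_kappa_sq hτ)).congr_of_eventuallyEq hG).congr_deriv ?_
  rw [kappaT_sq_eq_one_sub_kappa_sq hτ.le, ellipticE_eq_ellipticEParam,
    ellipticK_eq_ellipticKParam, show kappa τ ^ 4 = (kappa τ ^ 2) ^ 2 by ring]
  have : 1 - kappa τ ^ 2 ≠ 0 := (sub_pos.2 (kappa_sq_lt_one hτ.le)).ne'
  have := (kappa_sq_pos hτ).ne'
  field_simp
  ring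
end
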